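/- Convolution identity for constrained 2-dimensional walks: for all k, l ∈ N, p = (p_1, p_2) ∈ Z^2 and even m^+, m^-: w'_2(k, l; m^+, m^-; p) / ((m^+ - 2k)!(m^- - 2l)!) · binomial(m^+/2, k)^{-1} · binomial(m^- /2, l)^{-1} = Σ w'_1(m_1^+, m_1^-; p_1) · w'_1(m_2^+, m_2^-; p_2) / ((m_1^+ - k)!(m_1^- - l)!(m_2^+ - k)!(m_2^- - l)!), summed over m_1^+ + m_2^+ = m^+ with m_1^+, m_2^+ ≥ k and m_1^- + m_2^- = m^- with m_1^-, m_2^- ≥ l. -/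

import Mathlib

/-- `w'_1(s⁺, s⁻; q)`: the number (`1` or `0`) of 1-dimensional walks from `0`
to `q` with `s⁺` positive steps preceding `s⁻` negative steps. -/
def w1 (sp sn : ℕ) (q : ℤ) : ℕ := if (sp : ℤ) - (sn : ℤ) = q then 1 else 0

/-- `w'_2(k, l; m⁺, m⁻; p)` with `m⁺ = 2·np`, `m⁻ = 2·nn`: the number of
choices of `K ⊆ U` with `|K| = k`, `L ⊆ V` with `|L| = l`, together with a
2-dimensional walk from the origin to `p` whose `m⁺` positive steps (grouped
in pairs indexed by `U = Fin np`) precede its `m⁻` negative steps (grouped in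
pairs indexed by `V = Fin nn`), such that the pair of positive steps at each
`u ∈ K` is `(1, 2)` (0-indexed: `(0, 1)`) and the pair of negative steps at
each `v ∈ L` is `(1, 2)`. -/
noncomputable def W2klCount (np nn k l : ℕ) (p : Fin 2 → ℤ) : ℕ :=
  Nat.card {x : Finset (Fin np) × Finset (Fin nn) ×
      (Fin np → Fin 2 → Fin 2) × (Fin nn → Fin 2 → Fin 2) //
    x.1.card = k ∧ x.2.1.card = l ∧
    (∀ u ∈ x.1, x.2.2.1 u 0 = 0 ∧ x.2.2.1 u 1 = 1) ∧
    (∀ v ∈ x.2.1, x.2.2.2 v 0 = 0 ∧ x.2.2.2 v 1 = 1) ∧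
    ∀ j : Fin 2,
      ((Finset.univ.filter fun q : Fin np × Fin 2 => x.2.2.1 q.1 q.2 = j).card : ℤ) -
        ((Finset.univ.filter fun q : Fin nn × Fin 2 => x.2.2.2 q.1 q.2 = j).card : ℤ) = p j}

/-!
The endpoint constraint only sees how many positive and how many negative steps move in each
coordinate, so grouping the configurations by these step counts `(a, 2m - a)` turns it into the
product `w'_1 · w'_1`. For fixed counts, choosing the `k` marked pairs and then the coordinates of
the `2(m - k)` free steps gives `C(m, k) · C(2m - 2k, a - k)` configurations, and
`C(2m - 2k, a - k) / (2m - 2k)! = 1 / ((a - k)! (2m - a - k)!)`.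
-/

open Finset

lemma Finset.sum_comp_of_mapsTo {ι κ M : Type*} [AddCommMonoid M] [DecidableEq κ]
    {s : Finset ι} {t : Finset κ} {g : ι → κ} (hg : ∀ i ∈ s, g i ∈ t) (f : κ → M) :
    ∑ i ∈ s, f (g i) = ∑ j ∈ t, #{i ∈ s | g i = j} • f j := by
  rw [← sum_fiberwise_of_maps_to hg]
  refine sum_congr rfl fun j _ => ?_
  rw [← sum_const]
  exact sum_congr rfl fun i hi => by rw [(mem_filter.mp hi).2]

lemma Finset.sum_sum_comp_of_mapsTo {ι ι' κ κ' M : Type*} [AddCommMonoid M] [DecidableEq κ]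
    [DecidableEq κ'] {s : Finset ι} {s' : Finset ι'} {t : Finset κ} {t' : Finset κ'}
    {g : ι → κ} {g' : ι' → κ'} (hg : ∀ i ∈ s, g i ∈ t) (hg' : ∀ i ∈ s', g' i ∈ t')
    (f : κ → κ' → M) :
    ∑ i ∈ s, ∑ i' ∈ s', f (g i) (g' i') =
      ∑ j ∈ t, ∑ j' ∈ t', (#{i ∈ s | g i = j} * #{i ∈ s' | g' i = j'}) • f j j' := by
  calc ∑ i ∈ s, ∑ i' ∈ s', f (g i) (g' i')
      = ∑ j' ∈ t', ∑ i ∈ s, #{i ∈ s' | g' i = j'} • f (g i) j' :=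
        (sum_congr rfl fun i _ => sum_comp_of_mapsTo hg' (f (g i))).trans sum_comm
    _ = ∑ j' ∈ t', ∑ j ∈ t, #{i ∈ s | g i = j} • #{i ∈ s' | g' i = j'} • f j j' :=
        sum_congr rfl fun j' _ => sum_comp_of_mapsTo hg (fun j => _ • f j j')
    _ = _ := by
        rw [sum_comm]
        simp only [mul_smul]

section FixedFunctions

variable {α : Type*} [Fintype α] [DecidableEq α]

lemma card_filter_eq_add_card_filter_compl (B : Finset α) (p : α → Prop) [DecidablePred p] :
    #{a | p a} = #{a ∈ B | p a} + #{a ∈ Bᶜ | p a} := by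
  simp only [card_filter]
  exact (sum_add_sum_compl B _).symm

lemma card_fun_fin_two_eqOn_card_zeros (B : Finset α) (h : α → Fin 2) (m : ℕ) :
    #{F : α → Fin 2 | (∀ b ∈ B, F b = h b) ∧ #{a | F a = 0} = #{b ∈ B | h b = 0} + m} =
      (#Bᶜ).choose m := by
  have zeros_on_B : ∀ F : α → Fin 2, (∀ b ∈ B, F b = h b) →
      #{a ∈ B | F a = 0} = #{b ∈ B | h b = 0} := fun F hF =>
    congrArg card (filter_congr fun b hb => by rw [hF b hb])
  rw [← card_powersetCard]
  refine card_nbij' (fun F => {a ∈ Bᶜ | F a = 0})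
    (fun Y a => if a ∈ B then h a else if a ∈ Y then 0 else 1) ?_ ?_ ?_ ?_
  · intro F hF
    rw [mem_coe, mem_filter] at hF
    rw [mem_coe, mem_powersetCard]
    refine ⟨filter_subset _ _, ?_⟩
    dsimp only
    have hsplit := card_filter_eq_add_card_filter_compl B (fun a => F a = 0)
    rw [hF.2.2, zeros_on_B F hF.2.1] at hsplit
    omega
  · intro Y hY
    rw [mem_coe, mem_powersetCard] at hY
    rw [mem_coe, mem_filter]
    have hfixed : ∀ b ∈ B, (if b ∈ B then h b else if b ∈ Y then 0 else 1) = h b :=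
      fun b hb => if_pos hb
    refine ⟨mem_univ _, hfixed, ?_⟩
    have hY' : {a ∈ Bᶜ | (if a ∈ B then h a else if a ∈ Y then 0 else 1) = 0} = Y := by
      ext a
      by_cases hB : a ∈ B <;> by_cases hYa : a ∈ Y <;> simp [hB, hYa]
      simpa [hB] using hY.1 hYa
    rw [card_filter_eq_add_card_filter_compl B, zeros_on_B _ hfixed, hY', hY.2]
  · intro F hF
    funext a
    by_cases hB : a ∈ B
    · simp [hB, ((mem_filter.mp hF).2.1 a hB)]
    · by_cases h0 : F a = 0 <;> simp [hB, h0]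
      omega
  · intro Y hY
    rw [mem_coe, mem_powersetCard] at hY
    ext a
    by_cases hB : a ∈ B <;> by_cases hYa : a ∈ Y <;> simp [hB, hYa]
    simpa [hB] using hY.1 hYa

end FixedFunctions

def stepCount {n : ℕ} (f : Fin n → Fin 2 → Fin 2) (j : Fin 2) : ℕ :=
  #{q : Fin n × Fin 2 | f q.1 q.2 = j}

/-- A half of a walk with `2 * n` steps grouped in pairs: `f u i` is the coordinate moved by the
`i`-th step of pair `u`, and the `k` pairs in `K` are forced to be `(1, 2)`. -/
def markedHalfWalks (n k : ℕ) : Finset (Finset (Fin n) × (Fin n → Fin 2 → Fin 2)) :=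
  {s ∈ powersetCard k univ ×ˢ univ | ∀ u ∈ s.1, s.2 u 0 = 0 ∧ s.2 u 1 = 1}

section MarkedHalfWalks

variable {n : ℕ}

lemma stepCount_zero_add_stepCount_one (f : Fin n → Fin 2 → Fin 2) :
    stepCount f 0 + stepCount f 1 = 2 * n := by
  have hfib := card_eq_sum_card_fiberwise (f := fun q : Fin n × Fin 2 => f q.1 q.2)
    (s := univ) (t := univ) (fun _ _ => mem_coe.mpr (mem_univ _))
  rw [Fin.sum_univ_two, card_univ, Fintype.card_prod, Fintype.card_fin, Fintype.card_fin] at hfib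
  rw [stepCount, stepCount]
  omega

lemma card_le_stepCount {K : Finset (Fin n)} {f : Fin n → Fin 2 → Fin 2}
    (hf : ∀ u ∈ K, f u 0 = 0 ∧ f u 1 = 1) (j : Fin 2) : #K ≤ stepCount f j := by
  refine card_le_card_of_injOn (fun u => (u, j)) (fun u hu => ?_)
    (fun _ _ _ _ h => congrArg Prod.fst h)
  rw [mem_coe, mem_filter]
  refine ⟨mem_univ _, ?_⟩
  fin_cases j
  exacts [(hf u hu).1, (hf u hu).2]

lemma card_fun_fixedOn_stepCount_zero (K : Finset (Fin n)) (m : ℕ) :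
    #{f : Fin n → Fin 2 → Fin 2 |
        (∀ u ∈ K, f u 0 = 0 ∧ f u 1 = 1) ∧ stepCount f 0 = #K + m} =
      (2 * (n - #K)).choose m := by
  have hB : #{b ∈ K ×ˢ (univ : Finset (Fin 2)) | b.2 = 0} = #K := by
    rw [filter_product_right (fun j : Fin 2 => j = 0), card_product, filter_eq' univ 0]
    simp
  have hBc : #(K ×ˢ (univ : Finset (Fin 2)))ᶜ = 2 * (n - #K) := by
    rw [card_compl, card_product, card_univ, Fintype.card_prod, Fintype.card_fin,
      Fintype.card_fin]
    omega
  rw [← hBc, ← card_fun_fin_two_eqOn_card_zeros _ Prod.snd, hB]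
  refine card_equiv (Equiv.curry _ _ _).symm fun f => ?_
  simp only [forall_and, stepCount, mem_filter, mem_univ, true_and, mem_product, and_true,
    Prod.forall, Fin.forall_fin_two, Equiv.curry_symm_apply, Function.uncurry]
  rfl

def markedHalfWalkCount (n k : ℕ) (x : ℕ × ℕ) : ℕ :=
  if k ≤ x.1 ∧ k ≤ x.2 then n.choose k * (2 * (n - k)).choose (x.1 - k) else 0

lemma card_markedHalfWalks_filter_stepCount (k : ℕ) {x : ℕ × ℕ} (hx : x.1 + x.2 = 2 * n) :
    #{s ∈ markedHalfWalks n k | (stepCount s.2 0, stepCount s.2 1) = x} =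
      markedHalfWalkCount n k x := by
  rw [markedHalfWalkCount]
  split_ifs with hk
  · have hfilter : {s ∈ markedHalfWalks n k | (stepCount s.2 0, stepCount s.2 1) = x} =
        {s ∈ powersetCard k (univ : Finset (Fin n)) ×ˢ (univ : Finset (Fin n → Fin 2 → Fin 2)) |
          (∀ u ∈ s.1, s.2 u 0 = 0 ∧ s.2 u 1 = 1) ∧ stepCount s.2 0 = #s.1 + (x.1 - k)} := by
      ext s
      have := stepCount_zero_add_stepCount_one s.2
      simp only [markedHalfWalks, filter_filter, mem_filter, mem_product, mem_powersetCard,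
        Prod.ext_iff, mem_univ, subset_univ, true_and, and_true]
      constructor
      · rintro ⟨hK, hf, h0, -⟩
        exact ⟨hK, hf, by omega⟩
      · rintro ⟨hK, hf, h0⟩
        exact ⟨hK, hf, by omega, by omega⟩
    rw [hfilter, card_filter, sum_product]
    simp_rw [← card_filter]
    rw [sum_const_nat fun K hK => by
        rw [card_fun_fixedOn_stepCount_zero, (mem_powersetCard.mp hK).2],
      card_powersetCard, card_univ, Fintype.card_fin]
  · rw [card_eq_zero, filter_eq_empty_iff]
    rintro ⟨K, f⟩ hs hx'
    rw [markedHalfWalks, mem_filter, mem_product, mem_powersetCard] at hs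
    have h0 := card_le_stepCount hs.2 0
    have h1 := card_le_stepCount hs.2 1
    rw [hs.1.1.2] at h0 h1
    rw [← hx'] at hk
    exact hk ⟨h0, h1⟩

end MarkedHalfWalks

lemma W2klCount_eq_sum_markedHalfWalks (np nn k l : ℕ) (p : Fin 2 → ℤ) :
    W2klCount np nn k l p = ∑ s ∈ markedHalfWalks np k, ∑ t ∈ markedHalfWalks nn l,
      w1 (stepCount s.2 0) (stepCount t.2 0) (p 0) *
        w1 (stepCount s.2 1) (stepCount t.2 1) (p 1) := by
  classical
  let regroup : Finset (Fin np) × Finset (Fin nn) ×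
      (Fin np → Fin 2 → Fin 2) × (Fin nn → Fin 2 → Fin 2) ≃
      (Finset (Fin np) × (Fin np → Fin 2 → Fin 2)) × (Finset (Fin nn) × (Fin nn → Fin 2 → Fin 2)) :=
    ⟨fun x => ((x.1, x.2.2.1), (x.2.1, x.2.2.2)), fun y => (y.1.1, y.2.1, y.1.2, y.2.2),
      fun _ => rfl, fun _ => rfl⟩
  rw [W2klCount, Nat.card_eq_fintype_card, Fintype.card_subtype,
    card_equiv regroup (t := {st ∈ markedHalfWalks np k ×ˢ markedHalfWalks nn l |
      ∀ j, (stepCount st.1.2 j : ℤ) - stepCount st.2.2 j = p j}) fun x => ?_,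
    card_filter, sum_product]
  · refine sum_congr rfl fun s _ => sum_congr rfl fun t _ => ?_
    simp only [w1, Fin.forall_fin_two, ite_zero_mul_ite_zero, mul_one]
  · simp only [Fin.forall_fin_two, mem_filter, mem_univ, true_and, stepCount, markedHalfWalks,
      Equiv.coe_fn_mk, mem_product, mem_powersetCard, subset_univ, and_true, regroup]
    tauto

lemma W2klCount_eq_sum_antidiagonal (np nn k l : ℕ) (p : Fin 2 → ℤ) :
    W2klCount np nn k l p =
      ∑ x ∈ antidiagonal (2 * np), ∑ y ∈ antidiagonal (2 * nn),
        markedHalfWalkCount np k x * markedHalfWalkCount nn l y *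
          (w1 x.1 y.1 (p 0) * w1 x.2 y.2 (p 1)) := by
  have hsteps : ∀ n (s : Finset (Fin n) × (Fin n → Fin 2 → Fin 2)),
      (stepCount s.2 0, stepCount s.2 1) ∈ antidiagonal (2 * n) := fun _ s =>
    mem_antidiagonal.mpr (stepCount_zero_add_stepCount_one s.2)
  rw [W2klCount_eq_sum_markedHalfWalks]
  refine (sum_sum_comp_of_mapsTo (fun s _ => hsteps np s) (fun t _ => hsteps nn t)
    (fun x y => w1 x.1 y.1 (p 0) * w1 x.2 y.2 (p 1))).trans ?_
  refine sum_congr rfl fun x hx => sum_congr rfl fun y hy => ?_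
  rw [card_markedHalfWalks_filter_stepCount k (mem_antidiagonal.mp hx),
    card_markedHalfWalks_filter_stepCount l (mem_antidiagonal.mp hy), smul_eq_mul]

lemma markedHalfWalkCount_div_factorial_div_choose {n k : ℕ} {x : ℕ × ℕ}
    (hx : x.1 + x.2 = 2 * n) :
    (markedHalfWalkCount n k x : ℚ) / ((2 * n - 2 * k).factorial : ℚ) * ((n.choose k : ℚ))⁻¹ =
      if k ≤ x.1 ∧ k ≤ x.2 then (((x.1 - k).factorial : ℚ) * (x.2 - k).factorial)⁻¹ else 0 := by
  rw [markedHalfWalkCount]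
  split_ifs with hk
  · have hn : 2 * (n - k) = x.1 - k + (x.2 - k) := by omega
    have hn' : 2 * n - 2 * k = x.1 - k + (x.2 - k) := by omega
    have hchoose : (n.choose k : ℚ) ≠ 0 := by exact_mod_cast (Nat.choose_pos (by omega)).ne'
    rw [hn, hn', Nat.cast_mul, Nat.cast_add_choose]
    field_simp
  · simp

/-- **Lemma 11 (convolution identity)**: for all `k, l ∈ ℕ`,
`p = (p₁, p₂) ∈ ℤ²` and even `m⁺ = 2·np`, `m⁻ = 2·nn`,
`w'_2(k, l; m⁺, m⁻; p) / ((m⁺-2k)!(m⁻-2l)!) · C(m⁺/2, k)⁻¹ · C(m⁻/2, l)⁻¹`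
equals the sum over `m₁⁺ + m₂⁺ = m⁺` with `m₁⁺, m₂⁺ ≥ k` and
`m₁⁻ + m₂⁻ = m⁻` with `m₁⁻, m₂⁻ ≥ l` of
`w'_1(m₁⁺, m₁⁻; p₁) · w'_1(m₂⁺, m₂⁻; p₂) / ((m₁⁺-k)!(m₁⁻-l)!(m₂⁺-k)!(m₂⁻-l)!)`. -/
theorem convolution_identity (np nn k l : ℕ) (p : Fin 2 → ℤ) :
    (W2klCount np nn k l p : ℚ) /
        ((Nat.factorial (2 * np - 2 * k) : ℚ) * (Nat.factorial (2 * nn - 2 * l) : ℚ)) *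
        ((Nat.choose np k : ℚ))⁻¹ * ((Nat.choose nn l : ℚ))⁻¹ =
      ∑ x ∈ (Finset.HasAntidiagonal.antidiagonal (2 * np)).filter (fun x => k ≤ x.1 ∧ k ≤ x.2),
        ∑ y ∈ (Finset.HasAntidiagonal.antidiagonal (2 * nn)).filter (fun y => l ≤ y.1 ∧ l ≤ y.2),
          ((w1 x.1 y.1 (p 0) : ℚ) * (w1 x.2 y.2 (p 1) : ℚ)) /
            ((Nat.factorial (x.1 - k) : ℚ) * (Nat.factorial (y.1 - l) : ℚ) *
              (Nat.factorial (x.2 - k) : ℚ) * (Nat.factorial (y.2 - l) : ℚ)) := by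
  rw [W2klCount_eq_sum_antidiagonal]
  simp only [sum_filter, ite_sum_zero]
  push_cast [sum_div, sum_mul]
  refine sum_congr rfl fun x hx => sum_congr rfl fun y hy => ?_
  calc _ = ((markedHalfWalkCount np k x : ℚ) / ((2 * np - 2 * k).factorial : ℚ) *
          ((np.choose k : ℚ))⁻¹) *
        ((markedHalfWalkCount nn l y : ℚ) / ((2 * nn - 2 * l).factorial : ℚ) *
          ((nn.choose l : ℚ))⁻¹) * ((w1 x.1 y.1 (p 0) : ℚ) * (w1 x.2 y.2 (p 1) : ℚ)) := by
        ring
    _ = _ := by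
        rw [markedHalfWalkCount_div_factorial_div_choose (mem_antidiagonal.mp hx),
          markedHalfWalkCount_div_factorial_div_choose (mem_antidiagonal.mp hy)]
        split_ifs <;> ring
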